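/- Coercion irrelevance (computation part): for any skeleton substitution σ, if an ExEff computation c evaluates in zero or more ⤳c steps to a result c₁, and the cast computation c ▷ γ evaluates in zero or more ⤳c steps to a result c₂, then ε_σ(c₁) ≡⤳ ε_σ(c₂) in SkelEff. -/

import Mathlib

/-! # ExEff: an explicitly-typed core calculus for algebraic effect handlers
    (Karachalias, Pretnar, Saleh, Vanderhallen, Schrijvers,
     "Explicit Effect Subtyping")

    Syntax, typing, and small-step call-by-value operational semantics. -/

namespace ExEff

/-- Operation names. -/
abbrev Op := String

/-- Skeletons τ. -/
inductive Skel : Type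
  | var     : ℕ → Skel
  | unit    : Skel
  | arrow   : Skel → Skel → Skel
  | handler : Skel → Skel → Skel
  | all     : ℕ → Skel → Skel

/-- Dirts Δ: sets of operations terminated by ∅ or a dirt variable δ. -/
inductive Dirt : Type
  | var   : ℕ → Dirt
  | empty : Dirt
  | cons  : Op → Dirt → Dirt

mutual
/-- Value types T. -/
inductive VTy : Type
  | var     : ℕ → VTy
  | unit    : VTy
  | arrow   : VTy → CTy → VTy
  | handler : CTy → CTy → VTy
  | allSkel : ℕ → VTy → VTy
  | allTy   : ℕ → Skel → VTy → VTy
  | allDirt : ℕ → VTy → VTy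
  | qual    : SimpleCt → VTy → VTy

/-- Computation types C = T ! Δ. -/
inductive CTy : Type
  | bang : VTy → Dirt → CTy

/-- Simple coercion types π. -/
inductive SimpleCt : Type
  | vle : VTy → VTy → SimpleCt
  | dle : Dirt → Dirt → SimpleCt
end

/-- Coercion types ρ. -/
inductive Ct : Type
  | simple : SimpleCt → Ct
  | cle    : CTy → CTy → Ct

/-- Subtyping coercions γ. -/
inductive Coercion : Type
  | var       : ℕ → Coercion
  | unit      : Coercion
  | reflVar   : ℕ → Coercion
  | reflDirt  : Dirt → Coercion
  | arrow     : Coercion → Coercion → Coercion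
  | handler   : Coercion → Coercion → Coercion
  | emptyDirt : Dirt → Coercion
  | consOp    : Op → Coercion → Coercion
  | allSkel   : ℕ → Coercion → Coercion
  | allTy     : ℕ → Skel → Coercion → Coercion
  | allDirt   : ℕ → Coercion → Coercion
  | qual      : SimpleCt → Coercion → Coercion
  | bang      : Coercion → Coercion → Coercion

mutual
/-- Values v. -/
inductive Value : Type
  | var     : ℕ → Value
  | unit    : Value
  | lam     : ℕ → VTy → Comp → Value
  | handler : Handler → Value
  | lamSkel : ℕ → Value → Value
  | appSkel : Value → Skel → Value
  | lamTy   : ℕ → Skel → Value → Value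
  | appTy   : Value → VTy → Value
  | lamDirt : ℕ → Value → Value
  | appDirt : Value → Dirt → Value
  | lamCo   : ℕ → SimpleCt → Value → Value
  | appCo   : Value → Coercion → Value
  | cast    : Value → Coercion → Value

/-- Handlers { return (x : T) ↦ c_r, [Op x k ↦ c_Op] }. -/
inductive Handler : Type
  | mk : ℕ → VTy → Comp → OpClauses → Handler

/-- Lists of operation clauses Op x k ↦ c. -/
inductive OpClauses : Type
  | nil  : OpClauses
  | cons : Op → ℕ → ℕ → Comp → OpClauses → OpClauses

/-- Computations c. -/
inductive Comp : Type
  | ret    : Value → Comp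
  | opCall : Op → Value → ℕ → VTy → Comp → Comp
  | doIn   : ℕ → Comp → Comp → Comp
  | handle : Value → Comp → Comp
  | app    : Value → Value → Comp
  | letIn  : ℕ → Value → Comp → Comp
  | cast   : Comp → Coercion → Comp
end

/-! ## Substitution (naive, name-based) -/

def Skel.subst : Skel → ℕ → Skel → Skel
  | .var s, ς, τ' => if s = ς then τ' else .var s
  | .unit, _, _ => .unit
  | .arrow a b, ς, τ' => .arrow (a.subst ς τ') (b.subst ς τ')
  | .handler a b, ς, τ' => .handler (a.subst ς τ') (b.subst ς τ')
  | .all s a, ς, τ' => .all s (a.subst ς τ')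

def Dirt.subst : Dirt → ℕ → Dirt → Dirt
  | .var d, δ, Δ' => if d = δ then Δ' else .var d
  | .empty, _, _ => .empty
  | .cons op Δ, δ, Δ' => .cons op (Δ.subst δ Δ')

mutual
def VTy.substSkel : VTy → ℕ → Skel → VTy
  | .var a, _, _ => .var a
  | .unit, _, _ => .unit
  | .arrow T C, ς, τ' => .arrow (T.substSkel ς τ') (C.substSkel ς τ')
  | .handler C1 C2, ς, τ' => .handler (C1.substSkel ς τ') (C2.substSkel ς τ')
  | .allSkel s T, ς, τ' => .allSkel s (T.substSkel ς τ')
  | .allTy a τ T, ς, τ' => .allTy a (τ.subst ς τ') (T.substSkel ς τ')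
  | .allDirt d T, ς, τ' => .allDirt d (T.substSkel ς τ')
  | .qual π T, ς, τ' => .qual (π.substSkel ς τ') (T.substSkel ς τ')
def CTy.substSkel : CTy → ℕ → Skel → CTy
  | .bang T Δ, ς, τ' => .bang (T.substSkel ς τ') Δ
def SimpleCt.substSkel : SimpleCt → ℕ → Skel → SimpleCt
  | .vle T1 T2, ς, τ' => .vle (T1.substSkel ς τ') (T2.substSkel ς τ')
  | .dle Δ1 Δ2, _, _ => .dle Δ1 Δ2
end

mutual
def VTy.substTy : VTy → ℕ → VTy → VTy
  | .var a, α, T' => if a = α then T' else .var a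
  | .unit, _, _ => .unit
  | .arrow T C, α, T' => .arrow (T.substTy α T') (C.substTy α T')
  | .handler C1 C2, α, T' => .handler (C1.substTy α T') (C2.substTy α T')
  | .allSkel s T, α, T' => .allSkel s (T.substTy α T')
  | .allTy a τ T, α, T' => .allTy a τ (T.substTy α T')
  | .allDirt d T, α, T' => .allDirt d (T.substTy α T')
  | .qual π T, α, T' => .qual (π.substTy α T') (T.substTy α T')
def CTy.substTy : CTy → ℕ → VTy → CTy
  | .bang T Δ, α, T' => .bang (T.substTy α T') Δ
def SimpleCt.substTy : SimpleCt → ℕ → VTy → SimpleCt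
  | .vle T1 T2, α, T' => .vle (T1.substTy α T') (T2.substTy α T')
  | .dle Δ1 Δ2, _, _ => .dle Δ1 Δ2
end

mutual
def VTy.substDirt : VTy → ℕ → Dirt → VTy
  | .var a, _, _ => .var a
  | .unit, _, _ => .unit
  | .arrow T C, δ, Δ' => .arrow (T.substDirt δ Δ') (C.substDirt δ Δ')
  | .handler C1 C2, δ, Δ' => .handler (C1.substDirt δ Δ') (C2.substDirt δ Δ')
  | .allSkel s T, δ, Δ' => .allSkel s (T.substDirt δ Δ')
  | .allTy a τ T, δ, Δ' => .allTy a τ (T.substDirt δ Δ')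
  | .allDirt d T, δ, Δ' => .allDirt d (T.substDirt δ Δ')
  | .qual π T, δ, Δ' => .qual (π.substDirt δ Δ') (T.substDirt δ Δ')
def CTy.substDirt : CTy → ℕ → Dirt → CTy
  | .bang T Δ, δ, Δ' => .bang (T.substDirt δ Δ') (Δ.subst δ Δ')
def SimpleCt.substDirt : SimpleCt → ℕ → Dirt → SimpleCt
  | .vle T1 T2, δ, Δ' => .vle (T1.substDirt δ Δ') (T2.substDirt δ Δ')
  | .dle Δ1 Δ2, δ, Δ' => .dle (Δ1.subst δ Δ') (Δ2.subst δ Δ')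
end

def Coercion.substSkel : Coercion → ℕ → Skel → Coercion
  | .var w, _, _ => .var w
  | .unit, _, _ => .unit
  | .reflVar a, _, _ => .reflVar a
  | .reflDirt Δ, _, _ => .reflDirt Δ
  | .arrow γ1 γ2, ς, τ' => .arrow (γ1.substSkel ς τ') (γ2.substSkel ς τ')
  | .handler γ1 γ2, ς, τ' => .handler (γ1.substSkel ς τ') (γ2.substSkel ς τ')
  | .emptyDirt Δ, _, _ => .emptyDirt Δ
  | .consOp op γ, ς, τ' => .consOp op (γ.substSkel ς τ')
  | .allSkel s γ, ς, τ' => .allSkel s (γ.substSkel ς τ')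
  | .allTy a τ γ, ς, τ' => .allTy a (τ.subst ς τ') (γ.substSkel ς τ')
  | .allDirt d γ, ς, τ' => .allDirt d (γ.substSkel ς τ')
  | .qual π γ, ς, τ' => .qual (π.substSkel ς τ') (γ.substSkel ς τ')
  | .bang γ1 γ2, ς, τ' => .bang (γ1.substSkel ς τ') (γ2.substSkel ς τ')

mutual
/-- Reflexivity coercion for an arbitrary value type. -/
def VTy.reflCo : VTy → Coercion
  | .var a => .reflVar a
  | .unit => .unit
  | .arrow T C => .arrow T.reflCo C.reflCo
  | .handler C1 C2 => .handler C1.reflCo C2.reflCo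
  | .allSkel s T => .allSkel s T.reflCo
  | .allTy a τ T => .allTy a τ T.reflCo
  | .allDirt d T => .allDirt d T.reflCo
  | .qual π T => .qual π T.reflCo
def CTy.reflCo : CTy → Coercion
  | .bang T Δ => .bang T.reflCo (.reflDirt Δ)
end

def Coercion.substTy : Coercion → ℕ → VTy → Coercion
  | .var w, _, _ => .var w
  | .unit, _, _ => .unit
  | .reflVar a, α, T' => if a = α then T'.reflCo else .reflVar a
  | .reflDirt Δ, _, _ => .reflDirt Δ
  | .arrow γ1 γ2, α, T' => .arrow (γ1.substTy α T') (γ2.substTy α T')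
  | .handler γ1 γ2, α, T' => .handler (γ1.substTy α T') (γ2.substTy α T')
  | .emptyDirt Δ, _, _ => .emptyDirt Δ
  | .consOp op γ, α, T' => .consOp op (γ.substTy α T')
  | .allSkel s γ, α, T' => .allSkel s (γ.substTy α T')
  | .allTy a τ γ, α, T' => .allTy a τ (γ.substTy α T')
  | .allDirt d γ, α, T' => .allDirt d (γ.substTy α T')
  | .qual π γ, α, T' => .qual (π.substTy α T') (γ.substTy α T')
  | .bang γ1 γ2, α, T' => .bang (γ1.substTy α T') (γ2.substTy α T')

def Coercion.substDirt : Coercion → ℕ → Dirt → Coercion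
  | .var w, _, _ => .var w
  | .unit, _, _ => .unit
  | .reflVar a, _, _ => .reflVar a
  | .reflDirt Δ, δ, Δ' => .reflDirt (Δ.subst δ Δ')
  | .arrow γ1 γ2, δ, Δ' => .arrow (γ1.substDirt δ Δ') (γ2.substDirt δ Δ')
  | .handler γ1 γ2, δ, Δ' => .handler (γ1.substDirt δ Δ') (γ2.substDirt δ Δ')
  | .emptyDirt Δ, δ, Δ' => .emptyDirt (Δ.subst δ Δ')
  | .consOp op γ, δ, Δ' => .consOp op (γ.substDirt δ Δ')
  | .allSkel s γ, δ, Δ' => .allSkel s (γ.substDirt δ Δ')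
  | .allTy a τ γ, δ, Δ' => .allTy a τ (γ.substDirt δ Δ')
  | .allDirt d γ, δ, Δ' => .allDirt d (γ.substDirt δ Δ')
  | .qual π γ, δ, Δ' => .qual (π.substDirt δ Δ') (γ.substDirt δ Δ')
  | .bang γ1 γ2, δ, Δ' => .bang (γ1.substDirt δ Δ') (γ2.substDirt δ Δ')

def Coercion.substCo : Coercion → ℕ → Coercion → Coercion
  | .var w, ω, γ' => if w = ω then γ' else .var w
  | .unit, _, _ => .unit
  | .reflVar a, _, _ => .reflVar a
  | .reflDirt Δ, _, _ => .reflDirt Δ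
  | .arrow γ1 γ2, ω, γ' => .arrow (γ1.substCo ω γ') (γ2.substCo ω γ')
  | .handler γ1 γ2, ω, γ' => .handler (γ1.substCo ω γ') (γ2.substCo ω γ')
  | .emptyDirt Δ, _, _ => .emptyDirt Δ
  | .consOp op γ, ω, γ' => .consOp op (γ.substCo ω γ')
  | .allSkel s γ, ω, γ' => .allSkel s (γ.substCo ω γ')
  | .allTy a τ γ, ω, γ' => .allTy a τ (γ.substCo ω γ')
  | .allDirt d γ, ω, γ' => .allDirt d (γ.substCo ω γ')
  | .qual π γ, ω, γ' => .qual (π) (γ.substCo ω γ')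
  | .bang γ1 γ2, ω, γ' => .bang (γ1.substCo ω γ') (γ2.substCo ω γ')

/-- A bundle of simultaneous substitutions on all type-level sorts,
    used to map them through terms. -/
structure TySub where
  skel : Skel → Skel
  vty  : VTy → VTy
  dirt : Dirt → Dirt
  ct   : SimpleCt → SimpleCt
  co   : Coercion → Coercion

mutual
def Value.mapTy : Value → TySub → Value
  | .var x, _ => .var x
  | .unit, _ => .unit
  | .lam x T c, f => .lam x (f.vty T) (c.mapTy f)
  | .handler h, f => .handler (h.mapTy f)
  | .lamSkel s v, f => .lamSkel s (v.mapTy f)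
  | .appSkel v τ, f => .appSkel (v.mapTy f) (f.skel τ)
  | .lamTy a τ v, f => .lamTy a (f.skel τ) (v.mapTy f)
  | .appTy v T, f => .appTy (v.mapTy f) (f.vty T)
  | .lamDirt d v, f => .lamDirt d (v.mapTy f)
  | .appDirt v Δ, f => .appDirt (v.mapTy f) (f.dirt Δ)
  | .lamCo w π v, f => .lamCo w (f.ct π) (v.mapTy f)
  | .appCo v γ, f => .appCo (v.mapTy f) (f.co γ)
  | .cast v γ, f => .cast (v.mapTy f) (f.co γ)
def Handler.mapTy : Handler → TySub → Handler
  | .mk x T cr cls, f => .mk x (f.vty T) (cr.mapTy f) (cls.mapTy f)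
def OpClauses.mapTy : OpClauses → TySub → OpClauses
  | .nil, _ => .nil
  | .cons op x k c rest, f => .cons op x k (c.mapTy f) (rest.mapTy f)
def Comp.mapTy : Comp → TySub → Comp
  | .ret v, f => .ret (v.mapTy f)
  | .opCall op v y T c, f => .opCall op (v.mapTy f) y (f.vty T) (c.mapTy f)
  | .doIn x c1 c2, f => .doIn x (c1.mapTy f) (c2.mapTy f)
  | .handle v c, f => .handle (v.mapTy f) (c.mapTy f)
  | .app v1 v2, f => .app (v1.mapTy f) (v2.mapTy f)
  | .letIn x v c, f => .letIn x (v.mapTy f) (c.mapTy f)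
  | .cast c γ, f => .cast (c.mapTy f) (f.co γ)
end

/-- The substitution [τ/ς]. -/
def skelSub (ς : ℕ) (τ' : Skel) : TySub :=
  ⟨fun τ => τ.subst ς τ', fun T => T.substSkel ς τ', id,
   fun π => π.substSkel ς τ', fun γ => γ.substSkel ς τ'⟩

/-- The substitution [T/α]. -/
def tySub (α : ℕ) (T' : VTy) : TySub :=
  ⟨id, fun T => T.substTy α T', id,
   fun π => π.substTy α T', fun γ => γ.substTy α T'⟩

/-- The substitution [Δ/δ]. -/
def dirtSub (δ : ℕ) (Δ' : Dirt) : TySub :=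
  ⟨id, fun T => T.substDirt δ Δ', fun Δ => Δ.subst δ Δ',
   fun π => π.substDirt δ Δ', fun γ => γ.substDirt δ Δ'⟩

/-- The substitution [γ/ω]. -/
def coSub (ω : ℕ) (γ' : Coercion) : TySub :=
  ⟨id, id, id, id, fun γ => γ.substCo ω γ'⟩

mutual
def Value.substVal : Value → ℕ → Value → Value
  | .var y, x, w => if y = x then w else .var y
  | .unit, _, _ => .unit
  | .lam y T c, x, w => .lam y T (c.substVal x w)
  | .handler h, x, w => .handler (h.substVal x w)
  | .lamSkel s v, x, w => .lamSkel s (v.substVal x w)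
  | .appSkel v τ, x, w => .appSkel (v.substVal x w) τ
  | .lamTy a τ v, x, w => .lamTy a τ (v.substVal x w)
  | .appTy v T, x, w => .appTy (v.substVal x w) T
  | .lamDirt d v, x, w => .lamDirt d (v.substVal x w)
  | .appDirt v Δ, x, w => .appDirt (v.substVal x w) Δ
  | .lamCo o π v, x, w => .lamCo o π (v.substVal x w)
  | .appCo v γ, x, w => .appCo (v.substVal x w) γ
  | .cast v γ, x, w => .cast (v.substVal x w) γ
def Handler.substVal : Handler → ℕ → Value → Handler
  | .mk y T cr cls, x, w => .mk y T (cr.substVal x w) (cls.substVal x w)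
def OpClauses.substVal : OpClauses → ℕ → Value → OpClauses
  | .nil, _, _ => .nil
  | .cons op y k c rest, x, w => .cons op y k (c.substVal x w) (rest.substVal x w)
def Comp.substVal : Comp → ℕ → Value → Comp
  | .ret v, x, w => .ret (v.substVal x w)
  | .opCall op v y T c, x, w => .opCall op (v.substVal x w) y T (c.substVal x w)
  | .doIn y c1 c2, x, w => .doIn y (c1.substVal x w) (c2.substVal x w)
  | .handle v c, x, w => .handle (v.substVal x w) (c.substVal x w)
  | .app v1 v2, x, w => .app (v1.substVal x w) (v2.substVal x w)
  | .letIn y v c, x, w => .letIn y (v.substVal x w) (c.substVal x w)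
  | .cast c γ, x, w => .cast (c.substVal x w) γ
end

/-! ## Typing -/

/-- Global operation signature Σ. -/
def Sig := Op → Option (VTy × VTy)

/-- Typing environment entries. -/
inductive Entry : Type
  | skel    : ℕ → Entry
  | tyVar   : ℕ → Skel → Entry
  | dirtVar : ℕ → Entry
  | termVar : ℕ → VTy → Entry
  | coVar   : ℕ → SimpleCt → Entry

abbrev Env := List Entry

/-- Membership of an operation in a dirt. -/
inductive Dirt.Mem : Op → Dirt → Prop
  | head : Dirt.Mem op (.cons op Δ)
  | tail : Dirt.Mem op Δ → Dirt.Mem op (.cons op' Δ)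

/-- Extend a dirt with a finite set of operations 𝒪. -/
def opsDirt (O : List Op) (Δ : Dirt) : Dirt := O.foldr .cons Δ

/-- Coercion typing  Γ ⊢co γ : ρ. -/
inductive CoTyping : Env → Coercion → Ct → Prop
  | var : Entry.coVar ω π ∈ Γ → CoTyping Γ (.var ω) (.simple π)
  | unit : CoTyping Γ .unit (.simple (.vle .unit .unit))
  | reflVar : Entry.tyVar α τ ∈ Γ →
      CoTyping Γ (.reflVar α) (.simple (.vle (.var α) (.var α)))
  | reflDirt : CoTyping Γ (.reflDirt Δ) (.simple (.dle Δ Δ))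
  | arrow : CoTyping Γ γ1 (.simple (.vle T2 T1)) → CoTyping Γ γ2 (.cle C1 C2) →
      CoTyping Γ (.arrow γ1 γ2) (.simple (.vle (.arrow T1 C1) (.arrow T2 C2)))
  | handler : CoTyping Γ γ1 (.cle C3 C1) → CoTyping Γ γ2 (.cle C2 C4) →
      CoTyping Γ (.handler γ1 γ2) (.simple (.vle (.handler C1 C2) (.handler C3 C4)))
  | allSkel : CoTyping (Entry.skel ς :: Γ) γ (.simple (.vle T1 T2)) →
      CoTyping Γ (.allSkel ς γ) (.simple (.vle (.allSkel ς T1) (.allSkel ς T2)))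
  | allTy : CoTyping (Entry.tyVar α τ :: Γ) γ (.simple (.vle T1 T2)) →
      CoTyping Γ (.allTy α τ γ) (.simple (.vle (.allTy α τ T1) (.allTy α τ T2)))
  | allDirt : CoTyping (Entry.dirtVar δ :: Γ) γ (.simple (.vle T1 T2)) →
      CoTyping Γ (.allDirt δ γ) (.simple (.vle (.allDirt δ T1) (.allDirt δ T2)))
  | qual : CoTyping Γ γ (.simple (.vle T1 T2)) →
      CoTyping Γ (.qual π γ) (.simple (.vle (.qual π T1) (.qual π T2)))
  | emptyDirt : CoTyping Γ (.emptyDirt Δ) (.simple (.dle .empty Δ))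
  | bang : CoTyping Γ γ1 (.simple (.vle T1 T2)) → CoTyping Γ γ2 (.simple (.dle Δ1 Δ2)) →
      CoTyping Γ (.bang γ1 γ2) (.cle (.bang T1 Δ1) (.bang T2 Δ2))
  | consOp : CoTyping Γ γ (.simple (.dle Δ1 Δ2)) →
      CoTyping Γ (.consOp op γ) (.simple (.dle (.cons op Δ1) (.cons op Δ2)))

mutual
/-- Value typing  Γ ⊢v v : T. -/
inductive VTyping (sg : Sig) : Env → Value → VTy → Prop
  | var : Entry.termVar x T ∈ Γ → VTyping sg Γ (.var x) T
  | unit : VTyping sg Γ .unit .unit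
  | lam : CTyping sg (Entry.termVar x T :: Γ) c C →
      VTyping sg Γ (.lam x T c) (.arrow T C)
  | cast : VTyping sg Γ v T1 → CoTyping Γ γ (.simple (.vle T1 T2)) →
      VTyping sg Γ (.cast v γ) T2
  | lamSkel : VTyping sg (Entry.skel ς :: Γ) v T →
      VTyping sg Γ (.lamSkel ς v) (.allSkel ς T)
  | lamTy : VTyping sg (Entry.tyVar α τ :: Γ) v T →
      VTyping sg Γ (.lamTy α τ v) (.allTy α τ T)
  | lamDirt : VTyping sg (Entry.dirtVar δ :: Γ) v T →
      VTyping sg Γ (.lamDirt δ v) (.allDirt δ T)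
  | lamCo : VTyping sg (Entry.coVar ω π :: Γ) v T →
      VTyping sg Γ (.lamCo ω π v) (.qual π T)
  | appCo : VTyping sg Γ v (.qual π T) → CoTyping Γ γ (.simple π) →
      VTyping sg Γ (.appCo v γ) T
  | handler : CTyping sg (Entry.termVar x Tx :: Γ) cr (.bang T Δ) →
      ClausesTyping sg Γ cls T Δ O →
      VTyping sg Γ (.handler (.mk x Tx cr cls))
        (.handler (.bang Tx (opsDirt O Δ)) (.bang T Δ))
  | appSkel : VTyping sg Γ v (.allSkel ς T) →
      VTyping sg Γ (.appSkel v τ) (T.substSkel ς τ)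
  | appTy : VTyping sg Γ v (.allTy α τ T1) →
      VTyping sg Γ (.appTy v T2) (T1.substTy α T2)
  | appDirt : VTyping sg Γ v (.allDirt δ T) →
      VTyping sg Γ (.appDirt v Δ) (T.substDirt δ Δ)

/-- Typing for the operation clauses of a handler; the last argument collects
    the set 𝒪 of handled operations. -/
inductive ClausesTyping (sg : Sig) : Env → OpClauses → VTy → Dirt → List Op → Prop
  | nil : ClausesTyping sg Γ .nil T Δ []
  | cons : sg op = some (T1, T2) →
      CTyping sg (Entry.termVar k (.arrow T2 (.bang T Δ)) :: Entry.termVar x T1 :: Γ)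
        c (.bang T Δ) →
      ClausesTyping sg Γ rest T Δ ops →
      ClausesTyping sg Γ (.cons op x k c rest) T Δ (op :: ops)

/-- Computation typing  Γ ⊢c c : C. -/
inductive CTyping (sg : Sig) : Env → Comp → CTy → Prop
  | app : VTyping sg Γ v1 (.arrow T C) → VTyping sg Γ v2 T →
      CTyping sg Γ (.app v1 v2) C
  | letIn : VTyping sg Γ v T → CTyping sg (Entry.termVar x T :: Γ) c C →
      CTyping sg Γ (.letIn x v c) C
  | ret : VTyping sg Γ v T → CTyping sg Γ (.ret v) (.bang T .empty)
  | doIn : CTyping sg Γ c1 (.bang T1 Δ) →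
      CTyping sg (Entry.termVar x T1 :: Γ) c2 (.bang T2 Δ) →
      CTyping sg Γ (.doIn x c1 c2) (.bang T2 Δ)
  | opCall : sg op = some (T1, T2) → VTyping sg Γ v T1 →
      CTyping sg (Entry.termVar y T2 :: Γ) c (.bang T Δ) → Dirt.Mem op Δ →
      CTyping sg Γ (.opCall op v y T2 c) (.bang T Δ)
  | handle : VTyping sg Γ v (.handler C1 C2) → CTyping sg Γ c C1 →
      CTyping sg Γ (.handle v c) C2
  | cast : CTyping sg Γ c C1 → CoTyping Γ γ (.cle C1 C2) →
      CTyping sg Γ (.cast c γ) C2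
end

/-! ## Results -/

/-- Terminal values v^T. -/
inductive TerminalValue : Value → Prop
  | unit : TerminalValue .unit
  | lam : TerminalValue (.lam x T c)
  | handler : TerminalValue (.handler h)
  | lamSkel : TerminalValue (.lamSkel ς v)
  | lamTy : TerminalValue (.lamTy α τ v)
  | lamDirt : TerminalValue (.lamDirt δ v)
  | lamCo : TerminalValue (.lamCo ω π v)

/-- Value results v^R. -/
inductive ValueResult : Value → Prop
  | terminal : TerminalValue v → ValueResult v
  | castArrow : ValueResult v → ValueResult (.cast v (.arrow γ1 γ2))
  | castHandler : ValueResult v → ValueResult (.cast v (.handler γ1 γ2))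
  | castAllSkel : ValueResult v → ValueResult (.cast v (.allSkel ς γ))
  | castAllTy : ValueResult v → ValueResult (.cast v (.allTy α τ γ))
  | castAllDirt : ValueResult v → ValueResult (.cast v (.allDirt δ γ))
  | castQual : ValueResult v → ValueResult (.cast v (.qual π γ))

/-- Terminal computations c^T. -/
inductive TerminalComp : Comp → Prop
  | ret : ValueResult v → TerminalComp (.ret v)
  | cast : TerminalComp c → TerminalComp (.cast c (.bang γ1 γ2))

/-- Computation results c^R. -/
inductive CompResult : Comp → Prop
  | terminal : TerminalComp c → CompResult c
  | opCall : ValueResult v → CompResult (.opCall op v y T c)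

/-- `CastedRet c w`: c is `return v^R` wrapped in a stack of computation
    coercion casts (γ₁!γ₁') … (γₙ!γₙ'), and `w` is v^R cast by the pure
    parts γ₁ … γₙ. -/
inductive CastedRet : Comp → Value → Prop
  | ret : ValueResult v → CastedRet (.ret v) v
  | cast : CastedRet c w → CastedRet (.cast c (.bang γ1 γ2)) (.cast w γ1)

/-- Operation clause lookup in a handler. -/
def OpClauses.find : OpClauses → Op → Option (ℕ × ℕ × Comp)
  | .nil, _ => none
  | .cons op x k c rest, op' => if op = op' then some (x, k, c) else rest.find op'

/-! ## Operational semantics -/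

/-- Small-step relation on values  v ⤳v v'. -/
inductive VStep : Value → Value → Prop
  | castCong : VStep v v' → VStep (.cast v γ) (.cast v' γ)
  | pushUnit : ValueResult v → VStep (.cast v .unit) v
  | appSkelCong : VStep v v' → VStep (.appSkel v τ) (.appSkel v' τ)
  | appTyCong : VStep v v' → VStep (.appTy v T) (.appTy v' T)
  | appDirtCong : VStep v v' → VStep (.appDirt v Δ) (.appDirt v' Δ)
  | appCoCong : VStep v v' → VStep (.appCo v γ) (.appCo v' γ)
  | pushSkel : ValueResult v →
      VStep (.appSkel (.cast v (.allSkel ς γ)) τ)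
            (.cast (.appSkel v τ) (γ.substSkel ς τ))
  | pushTy : ValueResult v →
      VStep (.appTy (.cast v (.allTy α τ γ)) T)
            (.cast (.appTy v T) (γ.substTy α T))
  | pushDirt : ValueResult v →
      VStep (.appDirt (.cast v (.allDirt δ γ)) Δ)
            (.cast (.appDirt v Δ) (γ.substDirt δ Δ))
  | pushQual : ValueResult v →
      VStep (.appCo (.cast v (.qual π γ1)) γ2) (.cast (.appCo v γ2) γ1)
  | betaSkel : VStep (.appSkel (.lamSkel ς v) τ) (v.mapTy (skelSub ς τ))
  | betaTy : VStep (.appTy (.lamTy α τ v) T) (v.mapTy (tySub α T))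
  | betaDirt : VStep (.appDirt (.lamDirt δ v) Δ) (v.mapTy (dirtSub δ Δ))
  | betaCo : VStep (.appCo (.lamCo ω π v) γ) (v.mapTy (coSub ω γ))

/-- Small-step relation on computations  c ⤳c c'. -/
inductive CStep : Comp → Comp → Prop
  | castCong : CStep c c' → CStep (.cast c γ) (.cast c' γ)
  | appCong1 : VStep v1 v1' → CStep (.app v1 v2) (.app v1' v2)
  | appCong2 : TerminalValue v1 → VStep v2 v2' → CStep (.app v1 v2) (.app v1 v2')
  | pushApp : ValueResult v1 →
      CStep (.app (.cast v1 (.arrow γ1 γ2)) v2)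
            (.cast (.app v1 (.cast v2 γ1)) γ2)
  | betaApp : ValueResult w → CStep (.app (.lam x T c) w) (c.substVal x w)
  | letCong : VStep v v' → CStep (.letIn x v c) (.letIn x v' c)
  | betaLet : ValueResult w → CStep (.letIn x w c) (c.substVal x w)
  | retCong : VStep v v' → CStep (.ret v) (.ret v')
  | opCong : VStep v v' → CStep (.opCall op v y T c) (.opCall op v' y T c)
  | pushOp : ValueResult v →
      CStep (.cast (.opCall op v y T c) γ) (.opCall op v y T (.cast c γ))
  | doCong : CStep c1 c1' → CStep (.doIn x c1 c2) (.doIn x c1' c2)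
  | doRet : CastedRet c1 w → CStep (.doIn x c1 c2) (c2.substVal x w)
  | doOp : ValueResult v →
      CStep (.doIn x (.opCall op v y T c1) c2)
            (.opCall op v y T (.doIn x c1 c2))
  | handleCong1 : VStep v v' → CStep (.handle v c) (.handle v' c)
  | pushHandle : ValueResult v →
      CStep (.handle (.cast v (.handler γ1 γ2)) c)
            (.cast (.handle v (.cast c γ1)) γ2)
  | handleCong2 : TerminalValue v → CStep c c' → CStep (.handle v c) (.handle v c')
  | handleRet : CastedRet c w →
      CStep (.handle (.handler (.mk x Tx cr cls)) c) (cr.substVal x w)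
  | handleOp1 : OpClauses.find cls op = some (x', k, cop) → ValueResult v →
      CStep (.handle (.handler (.mk x Tx cr cls)) (.opCall op v y T c))
            ((cop.substVal x' v).substVal k
              (.lam y T (.handle (.handler (.mk x Tx cr cls)) c)))
  | handleOp2 : OpClauses.find cls op = none → ValueResult v →
      CStep (.handle (.handler (.mk x Tx cr cls)) (.opCall op v y T c))
            (.opCall op v y T (.handle (.handler (.mk x Tx cr cls)) c))

end ExEff

/-! # SkelEff: the skeleton-typed target calculus, and erasure from ExEff. -/

namespace SkelEff

open ExEff (Skel Op)

mutual
/-- SkelEff values. -/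
inductive Value : Type
  | var     : ℕ → Value
  | unit    : Value
  | handler : HandlerS → Value
  | lam     : ℕ → Skel → Comp → Value
  | lamSkel : ℕ → Value → Value
  | appSkel : Value → Skel → Value
inductive HandlerS : Type
  | mk : ℕ → Skel → Comp → Clauses → HandlerS
inductive Clauses : Type
  | nil  : Clauses
  | cons : Op → ℕ → ℕ → Comp → Clauses → Clauses
/-- SkelEff computations. -/
inductive Comp : Type
  | app    : Value → Value → Comp
  | letIn  : ℕ → Value → Comp → Comp
  | ret    : Value → Comp
  | opCall : Op → Value → ℕ → Skel → Comp → Comp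
  | doIn   : ℕ → Comp → Comp → Comp
  | handle : Value → Comp → Comp
end

/-! ## Substitution -/

mutual
def Value.substVal : Value → ℕ → Value → Value
  | .var y, x, w => if y = x then w else .var y
  | .unit, _, _ => .unit
  | .handler h, x, w => .handler (h.substVal x w)
  | .lam y τ c, x, w => .lam y τ (c.substVal x w)
  | .lamSkel s v, x, w => .lamSkel s (v.substVal x w)
  | .appSkel v τ, x, w => .appSkel (v.substVal x w) τ
def HandlerS.substVal : HandlerS → ℕ → Value → HandlerS
  | .mk y τ cr cls, x, w => .mk y τ (cr.substVal x w) (cls.substVal x w)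
def Clauses.substVal : Clauses → ℕ → Value → Clauses
  | .nil, _, _ => .nil
  | .cons op y k c rest, x, w => .cons op y k (c.substVal x w) (rest.substVal x w)
def Comp.substVal : Comp → ℕ → Value → Comp
  | .app v1 v2, x, w => .app (v1.substVal x w) (v2.substVal x w)
  | .letIn y v c, x, w => .letIn y (v.substVal x w) (c.substVal x w)
  | .ret v, x, w => .ret (v.substVal x w)
  | .opCall op v y τ c, x, w => .opCall op (v.substVal x w) y τ (c.substVal x w)
  | .doIn y c1 c2, x, w => .doIn y (c1.substVal x w) (c2.substVal x w)
  | .handle v c, x, w => .handle (v.substVal x w) (c.substVal x w)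
end

mutual
def Value.substSkel : Value → ℕ → Skel → Value
  | .var y, _, _ => .var y
  | .unit, _, _ => .unit
  | .handler h, s, τ' => .handler (h.substSkel s τ')
  | .lam y τ c, s, τ' => .lam y (τ.subst s τ') (c.substSkel s τ')
  | .lamSkel s' v, s, τ' => .lamSkel s' (v.substSkel s τ')
  | .appSkel v τ, s, τ' => .appSkel (v.substSkel s τ') (τ.subst s τ')
def HandlerS.substSkel : HandlerS → ℕ → Skel → HandlerS
  | .mk y τ cr cls, s, τ' => .mk y (τ.subst s τ') (cr.substSkel s τ') (cls.substSkel s τ')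
def Clauses.substSkel : Clauses → ℕ → Skel → Clauses
  | .nil, _, _ => .nil
  | .cons op y k c rest, s, τ' => .cons op y k (c.substSkel s τ') (rest.substSkel s τ')
def Comp.substSkel : Comp → ℕ → Skel → Comp
  | .app v1 v2, s, τ' => .app (v1.substSkel s τ') (v2.substSkel s τ')
  | .letIn y v c, s, τ' => .letIn y (v.substSkel s τ') (c.substSkel s τ')
  | .ret v, s, τ' => .ret (v.substSkel s τ')
  | .opCall op v y τ c, s, τ' => .opCall op (v.substSkel s τ') y (τ.subst s τ') (c.substSkel s τ')
  | .doIn y c1 c2, s, τ' => .doIn y (c1.substSkel s τ') (c2.substSkel s τ')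
  | .handle v c, s, τ' => .handle (v.substSkel s τ') (c.substSkel s τ')
end

/-! ## Typing -/

def Sig := Op → Option (Skel × Skel)

inductive Entry : Type
  | skel    : ℕ → Entry
  | termVar : ℕ → Skel → Entry

abbrev Env := List Entry

def Clauses.find : Clauses → Op → Option (ℕ × ℕ × Comp)
  | .nil, _ => none
  | .cons op x k c rest, op' => if op = op' then some (x, k, c) else rest.find op'

mutual
/-- SkelEff value typing  Γ ⊢v v : τ. -/
inductive VTyping (sg : Sig) : Env → Value → Skel → Prop
  | var : Entry.termVar x τ ∈ Γ → VTyping sg Γ (.var x) τ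
  | unit : VTyping sg Γ .unit .unit
  | lam : CTyping sg (Entry.termVar x τ1 :: Γ) c τ2 →
      VTyping sg Γ (.lam x τ1 c) (.arrow τ1 τ2)
  | appSkel : VTyping sg Γ v (.all ς τ1) →
      VTyping sg Γ (.appSkel v τ2) (τ1.subst ς τ2)
  | lamSkel : VTyping sg (Entry.skel ς :: Γ) v τ →
      VTyping sg Γ (.lamSkel ς v) (.all ς τ)
  | handler : CTyping sg (Entry.termVar x τx :: Γ) cr τ →
      ClausesTyping sg Γ cls τ →
      VTyping sg Γ (.handler (.mk x τx cr cls)) (.handler τx τ)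

inductive ClausesTyping (sg : Sig) : Env → Clauses → Skel → Prop
  | nil : ClausesTyping sg Γ .nil τ
  | cons : sg op = some (τ1, τ2) →
      CTyping sg (Entry.termVar k (.arrow τ2 τ) :: Entry.termVar x τ1 :: Γ) c τ →
      ClausesTyping sg Γ rest τ →
      ClausesTyping sg Γ (.cons op x k c rest) τ

/-- SkelEff computation typing  Γ ⊢c c : τ. -/
inductive CTyping (sg : Sig) : Env → Comp → Skel → Prop
  | app : VTyping sg Γ v1 (.arrow τ1 τ2) → VTyping sg Γ v2 τ1 →
      CTyping sg Γ (.app v1 v2) τ2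
  | letIn : VTyping sg Γ v τ1 → CTyping sg (Entry.termVar x τ1 :: Γ) c τ2 →
      CTyping sg Γ (.letIn x v c) τ2
  | ret : VTyping sg Γ v τ → CTyping sg Γ (.ret v) τ
  | opCall : sg op = some (τ1, τ2) → VTyping sg Γ v τ1 →
      CTyping sg (Entry.termVar y τ2 :: Γ) c τ →
      CTyping sg Γ (.opCall op v y τ2 c) τ
  | doIn : CTyping sg Γ c1 τ1 → CTyping sg (Entry.termVar x τ1 :: Γ) c2 τ2 →
      CTyping sg Γ (.doIn x c1 c2) τ2
  | handle : VTyping sg Γ v (.handler τ1 τ2) → CTyping sg Γ c τ1 →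
      CTyping sg Γ (.handle v c) τ2
end

/-! ## Operational semantics -/

/-- SkelEff value results. -/
inductive ValueResult : Value → Prop
  | unit : ValueResult .unit
  | handler : ValueResult (.handler h)
  | lam : ValueResult (.lam x τ c)
  | lamSkel : ValueResult (.lamSkel ς v)

inductive VStep : Value → Value → Prop
  | appSkelCong : VStep v v' → VStep (.appSkel v τ) (.appSkel v' τ)
  | betaSkel : VStep (.appSkel (.lamSkel ς v) τ) (v.substSkel ς τ)

inductive CStep : Comp → Comp → Prop
  | appCong1 : VStep v1 v1' → CStep (.app v1 v2) (.app v1' v2)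
  | appCong2 : ValueResult v1 → VStep v2 v2' → CStep (.app v1 v2) (.app v1 v2')
  | betaApp : ValueResult w → CStep (.app (.lam x τ c) w) (c.substVal x w)
  | letCong : VStep v v' → CStep (.letIn x v c) (.letIn x v' c)
  | betaLet : ValueResult w → CStep (.letIn x w c) (c.substVal x w)
  | retCong : VStep v v' → CStep (.ret v) (.ret v')
  | opCong : VStep v v' → CStep (.opCall op v y τ c) (.opCall op v' y τ c)
  | doCong : CStep c1 c1' → CStep (.doIn x c1 c2) (.doIn x c1' c2)
  | doRet : ValueResult w → CStep (.doIn x (.ret w) c2) (c2.substVal x w)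
  | doOp : ValueResult v →
      CStep (.doIn x (.opCall op v y τ c1) c2) (.opCall op v y τ (.doIn x c1 c2))
  | handleCong1 : VStep v v' → CStep (.handle v c) (.handle v' c)
  | handleCong2 : ValueResult v → CStep c c' → CStep (.handle v c) (.handle v c')
  | handleRet : ValueResult w →
      CStep (.handle (.handler (.mk x τx cr cls)) (.ret w)) (cr.substVal x w)
  | handleOp1 : Clauses.find cls op = some (x', k, cop) → ValueResult v →
      CStep (.handle (.handler (.mk x τx cr cls)) (.opCall op v y τ c))
            ((cop.substVal x' v).substVal k
              (.lam y τ (.handle (.handler (.mk x τx cr cls)) c)))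
  | handleOp2 : Clauses.find cls op = none → ValueResult v →
      CStep (.handle (.handler (.mk x τx cr cls)) (.opCall op v y τ c))
            (.opCall op v y τ (.handle (.handler (.mk x τx cr cls)) c))

/-! ## Congruence closure ≡⤳ of the step relations -/

mutual
/-- Congruence closure of the SkelEff step relation (values). -/
inductive VCong : Value → Value → Prop
  | step : VStep v v' → VCong v v'
  | refl : VCong v v
  | symm : VCong v v' → VCong v' v
  | trans : VCong v1 v2 → VCong v2 v3 → VCong v1 v3
  | handler : HCong h h' → VCong (.handler h) (.handler h')
  | lam : CCong c c' → VCong (.lam x τ c) (.lam x τ c')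
  | lamSkel : VCong v v' → VCong (.lamSkel ς v) (.lamSkel ς v')
  | appSkel : VCong v v' → VCong (.appSkel v τ) (.appSkel v' τ)
inductive HCong : HandlerS → HandlerS → Prop
  | mk : CCong cr cr' → ClCong cls cls' → HCong (.mk x τ cr cls) (.mk x τ cr' cls')
inductive ClCong : Clauses → Clauses → Prop
  | nil : ClCong .nil .nil
  | cons : CCong c c' → ClCong rest rest' →
      ClCong (.cons op x k c rest) (.cons op x k c' rest')
/-- Congruence closure of the SkelEff step relation (computations). -/
inductive CCong : Comp → Comp → Prop
  | step : CStep c c' → CCong c c'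
  | refl : CCong c c
  | symm : CCong c c' → CCong c' c
  | trans : CCong c1 c2 → CCong c2 c3 → CCong c1 c3
  | app : VCong v1 v1' → VCong v2 v2' → CCong (.app v1 v2) (.app v1' v2')
  | letIn : VCong v v' → CCong c c' → CCong (.letIn x v c) (.letIn x v' c')
  | ret : VCong v v' → CCong (.ret v) (.ret v')
  | opCall : VCong v v' → CCong c c' →
      CCong (.opCall op v y τ c) (.opCall op v' y τ c')
  | doIn : CCong c1 c1' → CCong c2 c2' → CCong (.doIn x c1 c2) (.doIn x c1' c2')
  | handle : VCong v v' → CCong c c' → CCong (.handle v c) (.handle v' c')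
end

/-! ## Erasure from ExEff to SkelEff -/

/-- Skeleton substitutions assigning a skeleton to each type variable. -/
abbrev SkSubst := ℕ → Skel

/-- The empty skeleton substitution ∅. -/
def emptySub : SkSubst := fun _ => .unit

def SkSubst.update (σ : SkSubst) (α : ℕ) (τ : Skel) : SkSubst :=
  fun β => if β = α then τ else σ β

mutual
/-- Erasure of ExEff value types to skeletons. -/
def eraseVTy (σ : SkSubst) : ExEff.VTy → Skel
  | .var a => σ a
  | .unit => .unit
  | .arrow T C => .arrow (eraseVTy σ T) (eraseCTy σ C)
  | .handler C1 C2 => .handler (eraseCTy σ C1) (eraseCTy σ C2)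
  | .allSkel s T => .all s (eraseVTy σ T)
  | .allTy a τ T => eraseVTy (σ.update a τ) T
  | .allDirt _ T => eraseVTy σ T
  | .qual _ T => eraseVTy σ T
/-- Erasure of ExEff computation types to skeletons. -/
def eraseCTy (σ : SkSubst) : ExEff.CTy → Skel
  | .bang T _ => eraseVTy σ T
end

mutual
/-- Erasure of ExEff values. -/
def eraseVal (σ : SkSubst) : ExEff.Value → Value
  | .var x => .var x
  | .unit => .unit
  | .lam x T c => .lam x (eraseVTy σ T) (eraseComp σ c)
  | .handler h => .handler (eraseHandler σ h)
  | .lamSkel s v => .lamSkel s (eraseVal σ v)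
  | .appSkel v τ => .appSkel (eraseVal σ v) τ
  | .lamTy a τ v => eraseVal (σ.update a τ) v
  | .appTy v _ => eraseVal σ v
  | .lamDirt _ v => eraseVal σ v
  | .appDirt v _ => eraseVal σ v
  | .lamCo _ _ v => eraseVal σ v
  | .appCo v _ => eraseVal σ v
  | .cast v _ => eraseVal σ v
def eraseHandler (σ : SkSubst) : ExEff.Handler → HandlerS
  | .mk x T cr cls => .mk x (eraseVTy σ T) (eraseComp σ cr) (eraseClauses σ cls)
def eraseClauses (σ : SkSubst) : ExEff.OpClauses → Clauses
  | .nil => .nil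
  | .cons op x k c rest => .cons op x k (eraseComp σ c) (eraseClauses σ rest)
/-- Erasure of ExEff computations. -/
def eraseComp (σ : SkSubst) : ExEff.Comp → Comp
  | .ret v => .ret (eraseVal σ v)
  | .opCall op v y T c => .opCall op (eraseVal σ v) y (eraseVTy σ T) (eraseComp σ c)
  | .doIn x c1 c2 => .doIn x (eraseComp σ c1) (eraseComp σ c2)
  | .handle v c => .handle (eraseVal σ v) (eraseComp σ c)
  | .app v1 v2 => .app (eraseVal σ v1) (eraseVal σ v2)
  | .letIn x v c => .letIn x (eraseVal σ v) (eraseComp σ c)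
  | .cast c _ => eraseComp σ c
end

/-- Erasure of ExEff typing environments. -/
def eraseEnv (σ : SkSubst) : ExEff.Env → Env
  | [] => []
  | .skel s :: Γ => .skel s :: eraseEnv σ Γ
  | .tyVar a τ :: Γ => eraseEnv (σ.update a τ) Γ
  | .dirtVar _ :: Γ => eraseEnv σ Γ
  | .termVar x T :: Γ => .termVar x (eraseVTy σ T) :: eraseEnv σ Γ
  | .coVar _ _ :: Γ => eraseEnv σ Γ

/-- Erasure of ExEff signatures. -/
def eraseSig (sg : ExEff.Sig) : Sig :=
  fun op => (sg op).map fun p => (eraseVTy emptySub p.1, eraseVTy emptySub p.2)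

end SkelEff

/-- Reading an ExEff typing environment as a substitution mapping each of its
    type variables to its annotated skeleton (abuse of notation `ε_Γ`). -/
def ExEff.Env.toSkSubst : ExEff.Env → SkelEff.SkSubst
  | [] => SkelEff.emptySub
  | .tyVar a τ :: Γ => (ExEff.Env.toSkSubst Γ).update a τ
  | _ :: Γ => ExEff.Env.toSkSubst Γ

/-! The relation `⤳c` is deterministic and results are normal forms, so `c` has at most one
result. A reduction of `c ▷ γ` can only reduce `c` under the cast until `c` reaches a result
`d`; the cast is then either terminal or pushed into the continuation of an operation call, and
in both cases erasure cannot see it. Hence `c₁ = d` and the two erasures coincide. -/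

theorem Relation.ReflTransGen.eq_of_rightUnique {α : Type*} {r : α → α → Prop}
    (hr : Relator.RightUnique r) {a b c : α} (hab : ReflTransGen r a b)
    (hb : ∀ x, ¬ r b x) (hac : ReflTransGen r a c) (hc : ∀ x, ¬ r c x) : b = c :=
  (total_of_right_unique hr hab hac).elim
    (fun hbc => ((reflTransGen_iff_eq hb).1 hbc).symm)
    (fun hcb => (reflTransGen_iff_eq hc).1 hcb)

namespace ExEff

open Relation

theorem ValueResult.not_step {v v' : Value} (h : ValueResult v) : ¬ VStep v v' := by
  induction h generalizing v' with
  | terminal ht => cases ht <;> nofun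
  | _ _ ih => rintro (⟨s⟩ | _); exact ih s

theorem TerminalComp.not_step {c c' : Comp} (h : TerminalComp c) : ¬ CStep c c' := by
  induction h generalizing c' with
  | ret hv => rintro ⟨⟩; exact hv.not_step ‹_›
  | cast hc ih => rintro (⟨s⟩ | ⟨⟩) <;> first | exact ih s | cases hc

theorem CompResult.not_step {c c' : Comp} (h : CompResult c) : ¬ CStep c c' := by
  rcases h with ht | hv
  · exact ht.not_step
  · rintro ⟨⟩; exact hv.not_step ‹_›

theorem CastedRet.terminalComp {c : Comp} {w : Value} (h : CastedRet c w) : TerminalComp c := by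
  induction h with
  | ret hv => exact .ret hv
  | cast _ ih => exact .cast ih

theorem CastedRet.right_unique {c : Comp} {w w' : Value} (h : CastedRet c w)
    (h' : CastedRet c w') : w = w' := by
  induction h generalizing w' with
  | ret => cases h'; rfl
  | cast _ ih => cases h' with | cast h' => rw [ih h']

/- In both determinism proofs distinct rules never overlap: where a push or β rule fires, the
subterm that a congruence rule would reduce is a result, and results are stuck. -/

theorem VStep.rightUnique : Relator.RightUnique VStep := by
  intro v a b h₁ h₂
  induction h₁ generalizing b <;> cases h₂ <;>
    grind [ValueResult.not_step, ValueResult, TerminalValue]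

theorem CStep.rightUnique : Relator.RightUnique CStep := by
  intro c a b h₁ h₂
  induction h₁ generalizing b <;> cases h₂ <;>
    grind [Relator.RightUnique, VStep.rightUnique, ValueResult.not_step, CompResult.not_step,
      CastedRet.terminalComp, CastedRet.right_unique, ValueResult, TerminalValue, CompResult,
      CastedRet]

theorem exists_result_eraseComp_eq_of_cast_reduces (σ : SkelEff.SkSubst) {c c₂ : Comp}
    {γ : Coercion} (h : ReflTransGen CStep (.cast c γ) c₂) (r₂ : CompResult c₂) :
    ∃ d, ReflTransGen CStep c d ∧ CompResult d ∧
      SkelEff.eraseComp σ d = SkelEff.eraseComp σ c₂ := by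
  generalize hcast : Comp.cast c γ = a at h
  induction h using ReflTransGen.head_induction_on generalizing c with
  | refl =>
    subst hcast
    rcases r₂ with ⟨⟨⟩ | ⟨hc⟩⟩
    exact ⟨c, .refl, .terminal hc, rfl⟩
  | head hstep hrest ih =>
    subst hcast
    cases hstep with
    | castCong hc =>
      obtain ⟨d, hd, rd, herase⟩ := ih rfl
      exact ⟨d, .head hc hd, rd, herase⟩
    | pushOp hv =>
      obtain rfl := (reflTransGen_iff_eq fun _ => (CompResult.opCall hv).not_step).1 hrest
      exact ⟨_, .refl, .opCall hv, rfl⟩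

end ExEff

/-- **Coercion irrelevance (computation part)**: for any skeleton
    substitution `σ`, if an ExEff computation `c` evaluates in zero or more
    `⤳c` steps to a result `c₁`, and the cast computation `c ▷ γ` evaluates
    in zero or more `⤳c` steps to a result `c₂`, then
    `ε_σ(c₁) ≡⤳ ε_σ(c₂)` in SkelEff. -/
theorem SkelEff.coercion_irrelevance_computations (σ : SkelEff.SkSubst)
    (c c₁ c₂ : ExEff.Comp) (γ : ExEff.Coercion)
    (h₁ : Relation.ReflTransGen ExEff.CStep c c₁) (r₁ : ExEff.CompResult c₁)
    (h₂ : Relation.ReflTransGen ExEff.CStep (.cast c γ) c₂)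
    (r₂ : ExEff.CompResult c₂) :
    SkelEff.CCong (SkelEff.eraseComp σ c₁) (SkelEff.eraseComp σ c₂) := by
  obtain ⟨d, hd, rd, herase⟩ := ExEff.exists_result_eraseComp_eq_of_cast_reduces σ h₂ r₂
  obtain rfl : c₁ = d := Relation.ReflTransGen.eq_of_rightUnique ExEff.CStep.rightUnique
    h₁ (fun _ => r₁.not_step) hd (fun _ => rd.not_step)
  rw [herase]
  exact .refl
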